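/- arXiv:2206.08044 — 3 statements merged into one kernel-verified Lean document; each statement's English description precedes it below -/
import Mathlib

section
/- For every integer d ≥ 2, there exists δ > 0 such that the upper hyperboloid sheet ℍ^d equipped with the distance d₁ is δ-hyperbolic, i.e. for all points w, x, y, z ∈ ℍ^d one has d₁(x,w) + d₁(y,z) ≤ max( d₁(x,y) + d₁(z,w), d₁(x,z) + d₁(y,w) ) + 2δ. -/
/-- Lorentz inner product on ℝ^(n+1): ⟨x,y⟩_L = -x₀y₀ + ∑_{i=1}^n xᵢyᵢ. -/
noncomputable def lorentz {n : ℕ} (x y : Fin (n + 1) → ℝ) : ℝ :=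
  -(x 0 * y 0) + ∑ i : Fin n, x i.succ * y i.succ

/-- The upper sheet of the hyperboloid in ℝ^(d+1). -/
def hyperboloid (d : ℕ) : Set (Fin (d + 1) → ℝ) :=
  {x | lorentz x x = -1 ∧ 0 < x 0}

/-- Inverse hyperbolic cosine. -/
noncomputable def arcosh (t : ℝ) : ℝ := Real.log (t + Real.sqrt (t ^ 2 - 1))

/-- Hyperbolic distance with curvature -1. -/
noncomputable def hypDist {d : ℕ} (x y : Fin (d + 1) → ℝ) : ℝ :=
  arcosh (-(lorentz x y))

/-- A distance function ρ on a set S is δ-hyperbolic. -/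
def IsDeltaHyperbolic {X : Type*} (ρ : X → X → ℝ) (S : Set X) (δ : ℝ) : Prop :=
  ∀ w ∈ S, ∀ x ∈ S, ∀ y ∈ S, ∀ z ∈ S,
    ρ x w + ρ y z ≤ max (ρ x y + ρ z w) (ρ x z + ρ y w) + 2 * δ

/-! ### Auxiliary lemmas -/

lemma lorentz_comm {n : ℕ} (x y : Fin (n + 1) → ℝ) : lorentz x y = lorentz y x := by
  simp only [lorentz, mul_comm]

/-- For two points on the upper hyperboloid, `-(lorentz x y) ≥ 1`. -/
lemma one_le_neg_lorentz {n : ℕ} {x y : Fin (n + 1) → ℝ}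
    (hx : x ∈ hyperboloid n) (hy : y ∈ hyperboloid n) : 1 ≤ -(lorentz x y) := by
  obtain ⟨hx1, hx0⟩ := hx
  obtain ⟨hy1, hy0⟩ := hy
  simp only [lorentz] at hx1 hy1 ⊢
  set p := ∑ i : Fin n, x i.succ * x i.succ with hp
  set q := ∑ i : Fin n, y i.succ * y i.succ with hq
  set s := ∑ i : Fin n, x i.succ * y i.succ with hs
  have hcs : s ^ 2 ≤ p * q := by
    have := Finset.sum_mul_sq_le_sq_mul_sq Finset.univ (fun i : Fin n => x i.succ)
      (fun i : Fin n => y i.succ)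
    simpa [hp, hq, hs, pow_two] using this
  have h2s : 2 * s ≤ p + q := by
    have hnn : (0:ℝ) ≤ ∑ i : Fin n, (x i.succ - y i.succ) ^ 2 :=
      Finset.sum_nonneg fun i _ => sq_nonneg _
    have hexp : ∑ i : Fin n, (x i.succ - y i.succ) ^ 2 = p - 2 * s + q := by
      simp only [hp, hq, hs, Finset.mul_sum, ← Finset.sum_sub_distrib,
        ← Finset.sum_add_distrib]
      exact Finset.sum_congr rfl fun i _ => by ring
    linarith [hexp ▸ hnn]
  have hx2 : x 0 * x 0 = 1 + p := by linarith
  have hy2 : y 0 * y 0 = 1 + q := by linarith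
  rcases le_or_gt (1 + s) 0 with h | h
  · nlinarith [mul_pos hx0 hy0]
  · have hsq : (1 + s) ^ 2 ≤ (x 0 * y 0) ^ 2 := by nlinarith
    nlinarith [mul_pos hx0 hy0]

/-- Reverse Cauchy–Schwarz corollary: a vector Lorentz-orthogonal to a timelike
vector has nonnegative Lorentz norm. -/
lemma lorentz_nonneg_of_perp {n : ℕ} {p s : Fin (n + 1) → ℝ}
    (hp : lorentz p p < 0) (hps : lorentz p s = 0) : 0 ≤ lorentz s s := by
  simp only [lorentz] at hp hps ⊢
  have hcs := Finset.sum_mul_sq_le_sq_mul_sq Finset.univ (fun i : Fin n => p i.succ)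
    (fun i : Fin n => s i.succ)
  have hpp : ∑ i : Fin n, p i.succ ^ 2 < p 0 ^ 2 := by
    have : ∑ i : Fin n, p i.succ ^ 2 = ∑ i : Fin n, p i.succ * p i.succ :=
      Finset.sum_congr rfl fun i _ => by ring
    nlinarith
  have hss : (0:ℝ) ≤ ∑ i : Fin n, s i.succ ^ 2 := Finset.sum_nonneg fun i _ => sq_nonneg _
  have hsum : ∑ i : Fin n, s i.succ * s i.succ = ∑ i : Fin n, s i.succ ^ 2 :=
    Finset.sum_congr rfl fun i _ => by ring
  have hperp : p 0 * s 0 = ∑ i : Fin n, p i.succ * s i.succ := by linarith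
  have hppnn : (0:ℝ) ≤ ∑ i : Fin n, p i.succ ^ 2 := Finset.sum_nonneg fun i _ => sq_nonneg _
  have hP0 : 0 < p 0 ^ 2 := lt_of_le_of_lt hppnn hpp
  have h1 : p 0 ^ 2 * s 0 ^ 2 = (∑ i : Fin n, p i.succ * s i.succ) ^ 2 := by
    rw [← hperp]; ring
  have h2 : p 0 ^ 2 * s 0 ^ 2 ≤ p 0 ^ 2 * ∑ i : Fin n, s i.succ ^ 2 := by
    calc p 0 ^ 2 * s 0 ^ 2 = (∑ i : Fin n, p i.succ * s i.succ) ^ 2 := h1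
      _ ≤ (∑ i : Fin n, p i.succ ^ 2) * ∑ i : Fin n, s i.succ ^ 2 := hcs
      _ ≤ p 0 ^ 2 * ∑ i : Fin n, s i.succ ^ 2 :=
          mul_le_mul_of_nonneg_right (le_of_lt hpp) hss
  have h3 : s 0 ^ 2 ≤ ∑ i : Fin n, s i.succ ^ 2 :=
    le_of_mul_le_mul_left h2 hP0
  nlinarith [h3]

lemma lorentz_comb_right {n : ℕ} (α β γ : ℝ) (x y z w : Fin (n + 1) → ℝ) :
    lorentz x (fun i => α * y i + β * z i + γ * w i) =
      α * lorentz x y + β * lorentz x z + γ * lorentz x w := by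
  simp only [lorentz, Finset.mul_sum, ← Finset.sum_add_distrib]
  rw [show (∑ i : Fin n, x i.succ * (α * y i.succ + β * z i.succ + γ * w i.succ)) =
      ∑ i : Fin n, (α * (x i.succ * y i.succ) + β * (x i.succ * z i.succ) +
        γ * (x i.succ * w i.succ)) from Finset.sum_congr rfl fun i _ => by ring]
  rw [Finset.sum_add_distrib, Finset.sum_add_distrib, ← Finset.mul_sum, ← Finset.mul_sum,
    ← Finset.mul_sum]
  ring

lemma lorentz_comb_self {n : ℕ} (α β γ : ℝ) (y z w : Fin (n + 1) → ℝ) :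
    lorentz (fun i => α * y i + β * z i + γ * w i) (fun i => α * y i + β * z i + γ * w i) =
      α ^ 2 * lorentz y y + β ^ 2 * lorentz z z + γ ^ 2 * lorentz w w +
        2 * (α * β) * lorentz y z + 2 * (α * γ) * lorentz y w +
        2 * (β * γ) * lorentz z w := by
  simp only [lorentz]
  rw [show (∑ i : Fin n, (α * y i.succ + β * z i.succ + γ * w i.succ) *
        (α * y i.succ + β * z i.succ + γ * w i.succ)) =
      ∑ i : Fin n, (α ^ 2 * (y i.succ * y i.succ) + β ^ 2 * (z i.succ * z i.succ) +
        γ ^ 2 * (w i.succ * w i.succ) + 2 * (α * β) * (y i.succ * z i.succ) +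
        2 * (α * γ) * (y i.succ * w i.succ) + 2 * (β * γ) * (z i.succ * w i.succ)) from
      Finset.sum_congr rfl fun i _ => by ring]
  simp only [Finset.sum_add_distrib, ← Finset.mul_sum]
  ring

/-- The key four-point inequality on the hyperboloid. -/
lemma key_ineq {n : ℕ} {x y z w : Fin (n + 1) → ℝ}
    (hx : x ∈ hyperboloid n) (hy : y ∈ hyperboloid n)
    (hz : z ∈ hyperboloid n) (hw : w ∈ hyperboloid n) :
    (-(lorentz x w)) * (-(lorentz y z)) ≤
      2 * ((-(lorentz x y)) * (-(lorentz z w)) + (-(lorentz x z)) * (-(lorentz y w))) := by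
  set a := -(lorentz x y) with ha'
  set b := -(lorentz x z) with hb'
  set c := -(lorentz x w) with hc'
  set d := -(lorentz z w) with hd'
  set e := -(lorentz y w) with he'
  set f := -(lorentz y z) with hf'
  have ha : 1 ≤ a := one_le_neg_lorentz hx hy
  have hb : 1 ≤ b := one_le_neg_lorentz hx hz
  have hc : 1 ≤ c := one_le_neg_lorentz hx hw
  have hd : 1 ≤ d := one_le_neg_lorentz hz hw
  have he : 1 ≤ e := one_le_neg_lorentz hy hw
  have hf : 1 ≤ f := one_le_neg_lorentz hy hz
  set s : Fin (n + 1) → ℝ := fun i => (b * c) * y i + (a * c) * z i + (-(2 * a * b)) * w i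
    with hs'
  have hperp : lorentz x s = 0 := by
    rw [hs', lorentz_comb_right]
    have h1 : lorentz x y = -a := by rw [ha']; ring
    have h2 : lorentz x z = -b := by rw [hb']; ring
    have h3 : lorentz x w = -c := by rw [hc']; ring
    rw [h1, h2, h3]; ring
  have hxx : lorentz x x < 0 := by rw [hx.1]; norm_num
  have hqs : 0 ≤ lorentz s s := lorentz_nonneg_of_perp hxx hperp
  have hexp : lorentz s s =
      (b * c) ^ 2 * (-1) + (a * c) ^ 2 * (-1) + (-(2 * a * b)) ^ 2 * (-1) +
        2 * ((b * c) * (a * c)) * (-f) + 2 * ((b * c) * (-(2 * a * b))) * (-e) +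
        2 * ((a * c) * (-(2 * a * b))) * (-d) := by
    rw [hs', lorentz_comb_self]
    rw [hy.1, hz.1, hw.1]
    have h1 : lorentz y z = -f := by rw [hf']; ring
    have h2 : lorentz y w = -e := by rw [he']; ring
    have h3 : lorentz z w = -d := by rw [hd']; ring
    rw [h1, h2, h3]
  rw [hexp] at hqs
  have habc : (0:ℝ) < 2 * a * b * c := by positivity
  have hmul : (2 * a * b * c) * (c * f) ≤ (2 * a * b * c) * (2 * (a * d + b * e)) := by
    nlinarith [sq_nonneg (a*c), sq_nonneg (b*c), sq_nonneg (a*b)]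
  exact le_of_mul_le_mul_left hmul habc

lemma arcosh_le_log (u : ℝ) (hu : 1 ≤ u) : arcosh u ≤ Real.log (2 * u) := by
  have h1 : Real.sqrt (u ^ 2 - 1) ≤ u := by
    have : Real.sqrt (u ^ 2 - 1) ≤ Real.sqrt (u ^ 2) := by
      apply Real.sqrt_le_sqrt; nlinarith
    rwa [Real.sqrt_sq (by linarith)] at this
  have h2 : u + Real.sqrt (u ^ 2 - 1) ≤ 2 * u := by linarith
  have h0 : (0:ℝ) ≤ Real.sqrt (u ^ 2 - 1) := Real.sqrt_nonneg _
  exact Real.log_le_log (by linarith) h2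

lemma log_le_arcosh (u : ℝ) (hu : 1 ≤ u) : Real.log u ≤ arcosh u := by
  have h1 : (0:ℝ) ≤ Real.sqrt (u ^ 2 - 1) := Real.sqrt_nonneg _
  exact Real.log_le_log (by linarith) (by linarith)

/-- For every integer d ≥ 2, there exists δ > 0 such that ℍ^d with d₁ is δ-hyperbolic. -/
theorem stmt0 (d : ℕ) (hd : 2 ≤ d) :
    ∃ δ > 0, IsDeltaHyperbolic (fun x y => hypDist x y) (hyperboloid d) δ := by
  refine ⟨Real.log 16 / 2, by positivity, ?_⟩
  intro w hw x hx y hy z hz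
  simp only
  have h2δ : 2 * (Real.log 16 / 2) = Real.log 16 := by ring
  rw [h2δ]
  set a := -(lorentz x y) with ha'
  set b := -(lorentz x z) with hb'
  set c := -(lorentz x w) with hc'
  set dd := -(lorentz z w) with hd'
  set e := -(lorentz y w) with he'
  set f := -(lorentz y z) with hf'
  have ha : 1 ≤ a := one_le_neg_lorentz hx hy
  have hb : 1 ≤ b := one_le_neg_lorentz hx hz
  have hc : 1 ≤ c := one_le_neg_lorentz hx hw
  have hdd : 1 ≤ dd := one_le_neg_lorentz hz hw
  have he : 1 ≤ e := one_le_neg_lorentz hy hw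
  have hf : 1 ≤ f := one_le_neg_lorentz hy hz
  have hkey : c * f ≤ 2 * (a * dd + b * e) := key_ineq hx hy hz hw
  have hDxw : hypDist x w = arcosh c := by rw [hypDist, hc']
  have hDyz : hypDist y z = arcosh f := by rw [hypDist, hf']
  have hDxy : hypDist x y = arcosh a := by rw [hypDist, ha']
  have hDzw : hypDist z w = arcosh dd := by rw [hypDist, hd']
  have hDxz : hypDist x z = arcosh b := by rw [hypDist, hb']
  have hDyw : hypDist y w = arcosh e := by rw [hypDist, he']
  clear_value a b c dd e f
  have hsum : hypDist x w + hypDist y z ≤ Real.log (4 * (c * f)) := by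
    rw [hDxw, hDyz]
    have h1 := arcosh_le_log c hc
    have h2 := arcosh_le_log f hf
    have h3 : Real.log (2 * c) + Real.log (2 * f) = Real.log (4 * (c * f)) := by
      rw [← Real.log_mul (by linarith) (by linarith)]
      congr 1; ring
    linarith
  rcases le_total (a * dd) (b * e) with hcase | hcase
  · have h4 : (4:ℝ) * (c * f) ≤ 16 * (b * e) := by nlinarith
    have h5 : Real.log (4 * (c * f)) ≤ Real.log (16 * (b * e)) :=
      Real.log_le_log (by nlinarith) h4
    have h6 : Real.log (16 * (b * e)) = Real.log 16 + Real.log b + Real.log e := by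
      rw [Real.log_mul (by norm_num) (by nlinarith), Real.log_mul (by linarith) (by linarith)]
      ring
    have h7 : Real.log b + Real.log e ≤ hypDist x z + hypDist y w := by
      rw [hDxz, hDyw]
      linarith [log_le_arcosh b hb, log_le_arcosh e he]
    calc hypDist x w + hypDist y z ≤ Real.log (4 * (c * f)) := hsum
      _ ≤ Real.log 16 + (hypDist x z + hypDist y w) := by rw [h6] at h5; linarith
      _ ≤ max (hypDist x y + hypDist z w) (hypDist x z + hypDist y w) + Real.log 16 := by
          have := le_max_right (hypDist x y + hypDist z w) (hypDist x z + hypDist y w)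
          linarith
  · have h4 : (4:ℝ) * (c * f) ≤ 16 * (a * dd) := by nlinarith
    have h5 : Real.log (4 * (c * f)) ≤ Real.log (16 * (a * dd)) :=
      Real.log_le_log (by nlinarith) h4
    have h6 : Real.log (16 * (a * dd)) = Real.log 16 + Real.log a + Real.log dd := by
      rw [Real.log_mul (by norm_num) (by nlinarith), Real.log_mul (by linarith) (by linarith)]
      ring
    have h7 : Real.log a + Real.log dd ≤ hypDist x y + hypDist z w := by
      rw [hDxy, hDzw]
      linarith [log_le_arcosh a ha, log_le_arcosh dd hdd]
    calc hypDist x w + hypDist y z ≤ Real.log (4 * (c * f)) := hsum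
      _ ≤ Real.log 16 + (hypDist x y + hypDist z w) := by rw [h6] at h5; linarith
      _ ≤ max (hypDist x y + hypDist z w) (hypDist x z + hypDist y w) + Real.log 16 := by
          have := le_max_left (hypDist x y + hypDist z w) (hypDist x z + hypDist y w)
          linarith
end

section
/- The hyperbolic distance between projected points has the stated gradient: fix κ < 0 and y ∈ ℝ^d, and let x ∈ ℝ^d with φ(x) ≠ φ(y). Write u(x) = ⟨φ(x), φ(y)⟩_L (so u(x) < -1). Then the map x ↦ (1/√(-κ)) arcosh(-u(x)) is differentiable at x with gradient equal to (1 / √( -κ (u(x)² - 1) )) · ( (√(1 + ‖y‖²) / √(1 + ‖x‖²)) x - y ). -/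
/-- The projection φ from ℝ^d (with Euclidean norm) into ℝ^(d+1),
φ(x) = (√(1 + ‖x‖²), x₁, …, x_d). -/
noncomputable def phiE {d : ℕ} (x : EuclideanSpace ℝ (Fin d)) : Fin (d + 1) → ℝ :=
  Fin.cons (Real.sqrt (1 + ‖x‖ ^ 2)) (fun i => x i)

open scoped RealInnerProductSpace

theorem hasDerivAt_arcosh {t : ℝ} (ht : 1 < t) :
    HasDerivAt arcosh (1 / √(t ^ 2 - 1)) t := by
  have hs : 0 < t ^ 2 - 1 := by nlinarith
  have hsqrt : 0 < √(t ^ 2 - 1) := Real.sqrt_pos.2 hs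
  have hpos : 0 < t + √(t ^ 2 - 1) := by linarith
  refine (((hasDerivAt_id' t).add
    (((hasDerivAt_pow 2 t).sub_const 1).sqrt hs.ne')).log hpos.ne').congr_deriv ?_
  simp only [Pi.add_apply]
  field_simp
  ring

theorem HasDerivAt.comp_hasGradientAt {F : Type*} [NormedAddCommGroup F] [InnerProductSpace ℝ F]
    [CompleteSpace F] {f : F → ℝ} {f' x : F} {g : ℝ → ℝ} {g' : ℝ}
    (hg : HasDerivAt g g' (f x)) (hf : HasGradientAt f f' x) :
    HasGradientAt (g ∘ f) (g' • f') x := by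
  simpa [hasGradientAt_iff_hasFDerivAt] using hg.comp_hasFDerivAt x hf

theorem hasGradientAt_sqrt_one_add_norm_sq {F : Type*} [NormedAddCommGroup F]
    [InnerProductSpace ℝ F] [CompleteSpace F] (x : F) :
    HasGradientAt (fun z => √(1 + ‖z‖ ^ 2)) ((√(1 + ‖x‖ ^ 2))⁻¹ • x) x := by
  have hpos : 0 < √(1 + ‖x‖ ^ 2) := by positivity
  refine (((hasStrictFDerivAt_norm_sq x).hasFDerivAt.const_add 1).sqrt
    (by positivity)).congr_fderiv ?_
  ext v
  simp only [one_div, mul_inv_rev, smul_apply, coe_innerSL_apply, nsmul_eq_mul, Nat.cast_ofNat,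
    smul_eq_mul, map_smul, InnerProductSpace.toDual_apply_apply]
  field_simp

theorem one_add_inner_lt_sqrt_mul_sqrt {F : Type*} [NormedAddCommGroup F] [InnerProductSpace ℝ F]
    {x y : F} (hne : x ≠ y) :
    1 + ⟪x, y⟫ < √(1 + ‖x‖ ^ 2) * √(1 + ‖y‖ ^ 2) := by
  rw [← Real.sqrt_mul (by positivity)]
  apply Real.lt_sqrt_of_sq_lt
  have hdist : 0 < ‖x - y‖ ^ 2 := pow_pos (norm_pos_iff.2 (sub_ne_zero.2 hne)) 2
  have hCS : ⟪x, y⟫ ^ 2 ≤ ‖x‖ ^ 2 * ‖y‖ ^ 2 := by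
    simpa [mul_pow, sq_abs] using pow_le_pow_left₀ (abs_nonneg _) (abs_real_inner_le_norm x y) 2
  rw [norm_sub_sq_real] at hdist
  nlinarith

theorem lorentz_phiE_phiE {d : ℕ} (x y : EuclideanSpace ℝ (Fin d)) :
    lorentz (phiE x) (phiE y) = ⟪x, y⟫ - √(1 + ‖x‖ ^ 2) * √(1 + ‖y‖ ^ 2) := by
  simp only [lorentz, phiE, Fin.cons_zero, Fin.cons_succ, PiLp.inner_apply, RCLike.inner_apply,
    Real.ringHom_apply, mul_comm]
  ring

theorem one_lt_neg_lorentz_phiE {d : ℕ} {x y : EuclideanSpace ℝ (Fin d)} (hne : x ≠ y) :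
    1 < -lorentz (phiE x) (phiE y) := by
  rw [lorentz_phiE_phiE]
  linarith [one_add_inner_lt_sqrt_mul_sqrt hne]

theorem hasGradientAt_neg_lorentz_phiE {d : ℕ} (y x : EuclideanSpace ℝ (Fin d)) :
    HasGradientAt (fun z => -lorentz (phiE z) (phiE y))
      ((√(1 + ‖y‖ ^ 2) / √(1 + ‖x‖ ^ 2)) • x - y) x := by
  have hfun : (fun z => -lorentz (phiE z) (phiE y)) =
      fun z => √(1 + ‖z‖ ^ 2) * √(1 + ‖y‖ ^ 2) - ⟪y, z⟫ := by
    funext z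
    rw [lorentz_phiE_phiE, real_inner_comm]
    ring
  rw [hfun]
  refine (((hasGradientAt_sqrt_one_add_norm_sq x).hasFDerivAt.mul_const √(1 + ‖y‖ ^ 2)).sub
    (innerSL ℝ y).hasFDerivAt).congr_fderiv ?_
  ext v
  simp only [map_smul, sub_apply, smul_apply, InnerProductSpace.toDual_apply_apply, smul_eq_mul,
    coe_innerSL_apply, map_sub, sub_left_inj]
  ring

/-- The hyperbolic distance x ↦ arcosh(-⟨φ(x), φ(y)⟩_L)/√(-κ) is differentiable
with the stated gradient. -/
theorem stmt16 (d : ℕ) (κ : ℝ) (hκ : κ < 0) (y x : EuclideanSpace ℝ (Fin d))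
    (hxy : phiE x ≠ phiE y) :
    HasGradientAt
      (fun z : EuclideanSpace ℝ (Fin d) =>
        (1 / Real.sqrt (-κ)) * arcosh (-(lorentz (phiE z) (phiE y))))
      ((1 / Real.sqrt (-κ * ((lorentz (phiE x) (phiE y)) ^ 2 - 1))) •
        ((Real.sqrt (1 + ‖y‖ ^ 2) / Real.sqrt (1 + ‖x‖ ^ 2)) • x - y)) x := by
  have hne : x ≠ y := by rintro rfl; exact hxy rfl
  have hcoef : 1 / √(-κ * (lorentz (phiE x) (phiE y) ^ 2 - 1)) =
      1 / √(-κ) * (1 / √((-lorentz (phiE x) (phiE y)) ^ 2 - 1)) := by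
    rw [Real.sqrt_mul (by linarith), neg_sq, one_div_mul_one_div]
  rw [hcoef]
  exact ((hasDerivAt_arcosh (one_lt_neg_lorentz_phiE hne)).const_mul _).comp_hasGradientAt
    (f := fun z => -lorentz (phiE z) (phiE y)) (hasGradientAt_neg_lorentz_phiE y x)
end

section
/- Every finite metric satisfying the four-point condition is a tree metric: let S be a finite set and D a metric on S such that for all w, x, y, z ∈ S, D(x,w) + D(y,z) ≤ max( D(x,y) + D(z,w), D(x,z) + D(y,w) ). Then there exists a finite connected acyclic simple graph T whose vertex set contains S, together with a nonnegative weight on each edge of T, such that for all a, b ∈ S, D(a,b) equals the sum of the edge weights along the unique path in T from a to b. -/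
/-!
Fix a base point `x` and let `(a | b) = (D x a + D x b - D a b) / 2` be the Gromov product at `x`.
The four-point condition says exactly that `min (a | b) (b | c) ≤ (a | c)`. Realise the tree as the
set of points "at height `(a | b)` on the segment from `x` to `a`", ordered by `(a, s) ≤ (c, t)` iff
`s ≤ t` and `s ≤ (a | c)`: the ultrametric inequality makes this a rooted tree order, i.e. the
elements below any point form a chain. The Hasse diagram of a finite rooted tree order is a tree,
and weighting each edge by the difference of the heights of its ends, the path between `u` and `v`
has length `h u + h v - 2 h (u ⊓ v)`. For the points `a, b` of `S` this is
`D x a + D x b - 2 (a | b) = D a b`.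
-/

universe u

open SimpleGraph

theorem isGLB_pair_of_le {V : Type*} [PartialOrder V] {a b : V} (h : a ≤ b) : IsGLB {a, b} a :=
  IsLeast.isGLB ⟨by simp, by simp [h]⟩

theorem hasse_reachable_of_le {V : Type*} [PartialOrder V] [Finite V] {a b : V} (h : a ≤ b) :
    (hasse V).Reachable a b := by
  let _ := LocallyFiniteOrder.ofFiniteIcc fun a b : V => Set.toFinite (Set.Icc a b)
  rw [reachable_iff_reflTransGen]
  exact Relation.ReflTransGen.mono (fun _ _ => Or.inl) _ _ (le_iff_reflTransGen_covBy.mp h)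

def edgeLength {V : Type*} (f : V → ℝ) : Sym2 V → ℝ :=
  Sym2.lift ⟨fun a b => |f a - f b|, fun _ _ => abs_sub_comm _ _⟩

theorem edgeLength_nonneg {V : Type*} (f : V → ℝ) (e : Sym2 V) : 0 ≤ edgeLength f e :=
  e.ind fun _ _ => abs_nonneg _

def IsTreeOrder (V : Type*) [PartialOrder V] : Prop := ∀ v : V, IsChain (· ≤ ·) (Set.Iic v)

namespace IsTreeOrder

variable {V : Type*} [PartialOrder V] (hV : IsTreeOrder V)
include hV

theorem le_of_lt_of_covBy {z w u : V} (hzu : z < u) (hwu : w ⋖ u) : z ≤ w := by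
  rcases (hV u).total hzu.le hwu.le with h | h
  · exact h
  · exact ((hwu.eq_or_eq h hzu.le).resolve_right hzu.ne).le

theorem eq_of_covBy {a b c : V} (hac : a ⋖ c) (hbc : b ⋖ c) : a = b :=
  (hV.le_of_lt_of_covBy hac.lt hbc).antisymm (hV.le_of_lt_of_covBy hbc.lt hac)

theorem eq_of_covBy_of_le {u w c : V} (huw : u ⋖ w) (hcw : c ≤ w) (hcu : ¬ c ≤ u) : c = w := by
  rcases (hV w).total hcw huw.le with h | h
  · exact absurd h hcu
  · exact (huw.eq_or_eq h hcw).resolve_left (by rintro rfl; exact hcu le_rfl)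

theorem mem_edges_of_covBy {a c u v : V} (hac : a ⋖ c) (p : (hasse V).Walk u v)
    (hu : ¬ c ≤ u) (hv : c ≤ v) : s(a, c) ∈ p.edges := by
  induction p with
  | nil => exact absurd hv hu
  | @cons u w v huw q ih =>
    by_cases hw : c ≤ w
    · rcases (huw : u ⋖ w ∨ w ⋖ u) with huw | hwu
      · obtain rfl := hV.eq_of_covBy_of_le huw hw hu
        obtain rfl := hV.eq_of_covBy hac huw
        exact List.mem_cons_self
      · exact absurd (hw.trans hwu.le) hu
    · exact List.mem_cons_of_mem _ (ih hw hv)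

theorem hasse_isAcyclic : (hasse V).IsAcyclic := by
  refine isAcyclic_iff_forall_adj_isBridge.mpr fun u w huw => ?_
  rw [isBridge_iff_forall_walk_mem_edges]
  intro p
  rcases huw with huw | hwu
  · exact hV.mem_edges_of_covBy huw p huw.lt.not_ge le_rfl
  · simpa [Sym2.eq_swap] using hV.mem_edges_of_covBy hwu p.reverse hwu.lt.not_ge le_rfl

theorem hasse_isTree [Finite V] {r : V} (hr : ∀ v, r ≤ v) : (hasse V).IsTree where
  connected :=
    have : Nonempty V := ⟨r⟩
    .mk fun u v => (hasse_reachable_of_le (hr u)).symm.trans (hasse_reachable_of_le (hr v))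
  isAcyclic := hV.hasse_isAcyclic

theorem isGLB_of_covBy {u v w m : V} (hm : IsGLB {u, v} m) (hwu : w ⋖ u) (huv : ¬ u ≤ v) :
    IsGLB {w, v} m := by
  have hmu : m < u := (hm.1 (by simp)).lt_of_ne fun h => huv (h ▸ hm.1 (by simp))
  refine ⟨?_, fun z hz => hm.2 ?_⟩
  · simp [hV.le_of_lt_of_covBy hmu hwu, hm.1 (by simp : v ∈ _)]
  · simp_all [(hz (by simp : w ∈ _)).trans hwu.le]

theorem sum_edgeLength_of_isPath {f : V → ℝ} (hf : Monotone f) {u v m : V}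
    (p : (hasse V).Walk u v) (hp : p.IsPath) (hm : IsGLB {u, v} m) :
    (p.edges.map (edgeLength f)).sum = f u + f v - 2 * f m := by
  induction p generalizing m with
  | @nil u =>
    obtain rfl : m = u := hm.unique (isGLB_pair_of_le le_rfl)
    simp; ring
  | @cons u w v huw q ih =>
    rw [Walk.cons_isPath_iff] at hp
    rw [Walk.edges_cons, List.map_cons, List.sum_cons]
    rcases (huw : u ⋖ w ∨ w ⋖ u) with huw | hwu
    · have hwv : w ≤ v := by
        by_contra hwv
        have := q.reverse.fst_mem_support_of_mem_edges
          (hV.mem_edges_of_covBy huw q.reverse hwv le_rfl)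
        exact hp.2 (by simpa using this)
      obtain rfl := hm.unique (isGLB_pair_of_le (huw.le.trans hwv))
      rw [ih hp.1 (isGLB_pair_of_le hwv)]
      simp [edgeLength, abs_of_nonpos (sub_nonpos.mpr (hf huw.le))]
      ring
    · have huv : ¬ u ≤ v := fun huv =>
        hp.2 (q.snd_mem_support_of_mem_edges (hV.mem_edges_of_covBy hwu q hwu.lt.not_ge huv))
      rw [ih hp.1 (hV.isGLB_of_covBy hm hwu huv)]
      simp [edgeLength, abs_of_nonneg (sub_nonneg.mpr (hf hwu.le))]
      ring

end IsTreeOrder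

section GromovProduct

variable {S : Type*} (D : S → S → ℝ) (x : S)

noncomputable def gromovProduct (a b : S) : ℝ := (D x a + D x b - D a b) / 2

variable {D x}

theorem gromovProduct_comm (hsymm : ∀ a b, D a b = D b a) (a b : S) :
    gromovProduct D x a b = gromovProduct D x b a := by
  simp only [gromovProduct, hsymm a b, add_comm (D x a)]

theorem gromovProduct_base_left (hD : ∀ a, D a a = 0) (a : S) : gromovProduct D x x a = 0 := by
  simp only [gromovProduct, hD]; ring

theorem triangle_of_fourPoint (hD : ∀ a, D a a = 0)
    (hfour : ∀ w x y z, D x w + D y z ≤ max (D x y + D z w) (D x z + D y w)) (a b c : S) :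
    D a c ≤ D a b + D b c := by
  simpa [hD] using hfour c a b b

theorem gromovProduct_le_self (hD : ∀ a, D a a = 0)
    (hfour : ∀ w x y z, D x w + D y z ≤ max (D x y + D z w) (D x z + D y w)) (a b : S) :
    gromovProduct D x a b ≤ gromovProduct D x a a := by
  unfold gromovProduct; linarith [triangle_of_fourPoint hD hfour x a b, hD a]

theorem gromovProduct_nonneg (hsymm : ∀ a b, D a b = D b a) (hD : ∀ a, D a a = 0)
    (hfour : ∀ w x y z, D x w + D y z ≤ max (D x y + D z w) (D x z + D y w)) (a b : S) :
    0 ≤ gromovProduct D x a b := by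
  unfold gromovProduct; linarith [triangle_of_fourPoint hD hfour a x b, hsymm a x]

theorem min_gromovProduct_le (hsymm : ∀ a b, D a b = D b a)
    (hfour : ∀ w x y z, D x w + D y z ≤ max (D x y + D z w) (D x z + D y w)) (a b c : S) :
    min (gromovProduct D x a b) (gromovProduct D x b c) ≤ gromovProduct D x a c := by
  unfold gromovProduct
  rcases le_max_iff.mp (hfour c a x b) with h | h
  · exact min_le_of_right_le (by linarith [hsymm a x])
  · exact min_le_of_left_le (by linarith)

end GromovProduct

section TreeVertices

variable {S : Type*} {D : S → S → ℝ} {x : S}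

variable (D x)

/-- The point at height `s = (a | b)` on the segment from `x` to `a`, encoded by `s` and the set of
those `c` whose segment from `x` branches off the segment to `a` below `s`. -/
noncomputable def treePoint (a b : S) : Set S × ℝ :=
  ({c | gromovProduct D x a c < gromovProduct D x a b}, gromovProduct D x a b)

def treeVertices : Set (Set S × ℝ) := Set.range fun p : S × S => treePoint D x p.1 p.2

instance [Finite S] : Finite (treeVertices D x) :=
  Set.finite_range _

noncomputable def treeVertex (a b : S) : treeVertices D x := ⟨treePoint D x a b, (a, b), rfl⟩

variable {D x}

theorem exists_eq_treeVertex (v : treeVertices D x) : ∃ a b, v = treeVertex D x a b := by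
  obtain ⟨_, ⟨a, b⟩, rfl⟩ := v
  exact ⟨a, b, rfl⟩

variable (hsymm : ∀ a b, D a b = D b a) (hD : ∀ a, D a a = 0)
  (hfour : ∀ w x y z, D x w + D y z ≤ max (D x y + D z w) (D x z + D y w))
include hsymm hD hfour

theorem treeVertex_le_treeVertex_iff {a b c d : S} :
    treeVertex D x a b ≤ treeVertex D x c d ↔
      gromovProduct D x a b ≤ gromovProduct D x c d ∧
        gromovProduct D x a b ≤ gromovProduct D x a c := by
  change treePoint D x a b ≤ treePoint D x c d ↔ _
  simp only [treePoint, Prod.mk_le_mk, Set.ofPred_subset_ofPred]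
  constructor
  · rintro ⟨hsub, hst⟩
    exact ⟨hst, not_lt.mp fun hac => (hsub c hac).not_ge (gromovProduct_le_self hD hfour c d)⟩
  · rintro ⟨hst, hac⟩
    refine ⟨fun e hae => not_le.mp fun hce => hae.not_ge ?_, hst⟩
    exact (le_min hac (hst.trans hce)).trans (min_gromovProduct_le hsymm hfour a c e)

theorem isTreeOrder_treeVertices : IsTreeOrder (treeVertices D x) := by
  rintro v u₁ h₁ u₂ h₂ -
  obtain ⟨c, d, rfl⟩ := exists_eq_treeVertex v
  obtain ⟨a₁, b₁, rfl⟩ := exists_eq_treeVertex u₁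
  obtain ⟨a₂, b₂, rfl⟩ := exists_eq_treeVertex u₂
  simp only [Set.mem_Iic, treeVertex_le_treeVertex_iff hsymm hD hfour] at h₁ h₂ ⊢
  rcases le_total (gromovProduct D x a₁ b₁) (gromovProduct D x a₂ b₂) with h | h
  · refine .inl ⟨h, (le_min h₁.2 (h.trans ?_)).trans (min_gromovProduct_le hsymm hfour a₁ c a₂)⟩
    exact h₂.2.trans_eq (gromovProduct_comm hsymm _ _)
  · refine .inr ⟨h, (le_min h₂.2 (h.trans ?_)).trans (min_gromovProduct_le hsymm hfour a₂ c a₁)⟩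
    exact h₁.2.trans_eq (gromovProduct_comm hsymm _ _)

theorem treeVertex_base_le (v : treeVertices D x) : treeVertex D x x x ≤ v := by
  obtain ⟨c, d, rfl⟩ := exists_eq_treeVertex v
  rw [treeVertex_le_treeVertex_iff hsymm hD hfour, gromovProduct_base_left hD,
    gromovProduct_base_left hD]
  exact ⟨gromovProduct_nonneg hsymm hD hfour c d, le_rfl⟩

theorem isGLB_treeVertex (a b : S) :
    IsGLB {treeVertex D x a a, treeVertex D x b b} (treeVertex D x a b) := by
  refine ⟨?_, fun v hv => ?_⟩
  · simp only [mem_lowerBounds, Set.mem_insert_iff, Set.mem_singleton_iff, forall_eq_or_imp,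
      forall_eq, treeVertex_le_treeVertex_iff hsymm hD hfour]
    have h := gromovProduct_le_self (x := x) hD hfour
    exact ⟨⟨h a b, h a b⟩, gromovProduct_comm hsymm a b ▸ h b a, le_rfl⟩
  · obtain ⟨c, d, rfl⟩ := exists_eq_treeVertex v
    have hva := hv (Set.mem_insert _ _)
    have hvb := hv (Set.mem_insert_of_mem _ rfl)
    rw [treeVertex_le_treeVertex_iff hsymm hD hfour] at hva hvb ⊢
    refine ⟨(le_min hva.2 hvb.2).trans ?_, hva.2⟩
    exact gromovProduct_comm hsymm c a ▸ min_gromovProduct_le hsymm hfour a c b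

theorem sum_edgeLength_treeVertex {a b : S}
    (p : (hasse (treeVertices D x)).Walk (treeVertex D x a a) (treeVertex D x b b))
    (hp : p.IsPath) : (p.edges.map (edgeLength fun v => v.1.2)).sum = D a b := by
  rw [(isTreeOrder_treeVertices hsymm hD hfour).sum_edgeLength_of_isPath (fun _ _ h => h.2) p hp
    (isGLB_treeVertex hsymm hD hfour a b)]
  simp only [treeVertex, treePoint, gromovProduct, hD]
  ring

end TreeVertices

theorem stmt19_general {S : Type u} [Fintype S] (D : S → S → ℝ)
    (heq : ∀ a b, D a b = 0 ↔ a = b)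
    (hsymm : ∀ a b, D a b = D b a)
    (hfour : ∀ w x y z, D x w + D y z ≤ max (D x y + D z w) (D x z + D y w)) :
    ∃ (V : Type u) (_ : Fintype V) (G : SimpleGraph V) (ι : S ↪ V)
      (wt : Sym2 V → ℝ),
      G.IsTree ∧ (∀ e, 0 ≤ wt e) ∧
      ∀ a b : S, ∀ p : G.Walk (ι a) (ι b), p.IsPath →
        D a b = (p.edges.map wt).sum := by
  have hD : ∀ a, D a a = 0 := fun a => (heq a a).mpr rfl
  rcases isEmpty_or_nonempty S with _ | ⟨⟨x⟩⟩
  · exact ⟨PUnit, inferInstance, ⊥, .ofIsEmpty, 0, .of_subsingleton, fun _ => le_rfl, isEmptyElim⟩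
  have hinj : Function.Injective fun a => treeVertex D x a a := fun a b h => (heq a b).mp <| by
    simpa using (sum_edgeLength_treeVertex hsymm hD hfour (Walk.nil.copy rfl h) (by simp)).symm
  exact ⟨treeVertices D x, Fintype.ofFinite _, hasse _, ⟨_, hinj⟩, edgeLength fun v => v.1.2,
    (isTreeOrder_treeVertices hsymm hD hfour).hasse_isTree (treeVertex_base_le hsymm hD hfour),
    edgeLength_nonneg _, fun _ _ p hp => (sum_edgeLength_treeVertex hsymm hD hfour p hp).symm⟩

/-- Every finite metric satisfying the four-point condition is a tree metric:
there is a finite tree whose vertex set contains `S` (via an embedding `ι`),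
with nonnegative edge weights, realising `D` as the sum of edge weights along
the unique path between the corresponding vertices. -/
theorem stmt19 {S : Type u} [Fintype S] (D : S → S → ℝ)
    (hnonneg : ∀ a b, 0 ≤ D a b)
    (heq : ∀ a b, D a b = 0 ↔ a = b)
    (hsymm : ∀ a b, D a b = D b a)
    (htri : ∀ a b c, D a c ≤ D a b + D b c)
    (hfour : ∀ w x y z, D x w + D y z ≤ max (D x y + D z w) (D x z + D y w)) :
    ∃ (V : Type u) (_ : Fintype V) (G : SimpleGraph V) (ι : S ↪ V)
      (wt : Sym2 V → ℝ),
      G.IsTree ∧ (∀ e, 0 ≤ wt e) ∧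
      ∀ a b : S, ∀ p : G.Walk (ι a) (ι b), p.IsPath →
        D a b = (p.edges.map wt).sum :=
  stmt19_general D heq hsymm hfour
end
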